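/- Let A = (a_{ij}) ∈ ℝ^{d×m} be a matrix with strictly positive entries, d ≥ 1, and regard its columns a_{·1}, …, a_{·m} as points of ℝ^d. Then the d-dimensional Lebesgue volume of their convex hull satisfies vol(conv{a_{·1},…,a_{·m}}) ≤ (d+1) · C(m, d+1) · max_{φ} ∏_{i∈[d]} a_{i,φ(i)}, where C(m,d+1) is the binomial coefficient and the maximum is over all injective maps φ : [d] → [m]. -/

import Mathlib

/-!
By Carathéodory the hull of the columns is covered by the `C(m, d+1)` simplices spanned by
`d + 1` of them, and it is null when `m ≤ d`. The simplex with vertices `v₀, …, v_d` is the image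
of the corner simplex `conv {0, e₁, …, e_d}` under `x ↦ v₀ + ∑ₖ xₖ (vₖ₊₁ - v₀)`, so its volume is
`|det (vₖ₊₁ - v₀)|` times that of the corner simplex. The latter is at most `1 / d!`: the suffix-sum
map (of determinant one) sends it into the sorted region `1 ≥ x₀ ≥ ⋯ ≥ x_{d-1} ≥ 0`, and the `d!`
coordinate permutations of this region cover the unit cube with null overlaps. Finally
`det (vₖ₊₁ - v₀)` is the determinant of the matrix with rows `(1, vₖ)`, each of whose `(d+1)!`
Leibniz terms is a product `∏ᵢ a_{i,φ(i)}` with `φ` injective.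
-/

open MeasureTheory Set Matrix
open scoped ENNReal Pointwise

theorem volume_setOf_apply_eq_apply {ι : Type*} [Fintype ι] {i j : ι} (hij : i ≠ j) :
    volume {x : ι → ℝ | x i = x j} = 0 := by
  classical
  have hker : {x : ι → ℝ | x i = x j} =
      LinearMap.ker ((LinearMap.proj i : (ι → ℝ) →ₗ[ℝ] ℝ) - LinearMap.proj j) := by
    ext x
    simp [sub_eq_zero]
  rw [hker]
  refine Measure.addHaar_submodule _ _ fun htop => ?_
  have hsingle : Pi.single i (1 : ℝ) ∈
      LinearMap.ker ((LinearMap.proj i : (ι → ℝ) →ₗ[ℝ] ℝ) - LinearMap.proj j) := htop ▸ trivial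
  simp [hij.symm] at hsingle

theorem volume_setOf_not_injective {ι : Type*} [Fintype ι] :
    volume {x : ι → ℝ | ¬Function.Injective x} = 0 := by
  have hcover : {x : ι → ℝ | ¬Function.Injective x} ⊆
      ⋃ (i) (j) (_ : i ≠ j), {x : ι → ℝ | x i = x j} := by
    intro x hx
    simp only [Function.Injective, not_forall] at hx
    obtain ⟨i, j, hxij, hij⟩ := hx
    simp only [mem_iUnion]
    exact ⟨i, j, hij, hxij⟩
  exact measure_mono_null hcover <| measure_iUnion_null fun i => measure_iUnion_null fun j =>
    measure_iUnion_null fun hij => volume_setOf_apply_eq_apply hij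

section SortedCube

variable {d : ℕ}

def sortedCube (σ : Equiv.Perm (Fin d)) : Set (Fin d → ℝ) :=
  univ.pi (fun _ => Icc 0 1) ∩ {x | Antitone (x ∘ σ)}

theorem isClosed_sortedCube (σ : Equiv.Perm (Fin d)) : IsClosed (sortedCube σ) :=
  (isClosed_set_pi fun _ _ => isClosed_Icc).inter <|
    isClosed_antitone.preimage (f := fun x : Fin d → ℝ => x ∘ σ) (by fun_prop)

theorem convex_sortedCube (σ : Equiv.Perm (Fin d)) : Convex ℝ (sortedCube σ) := by
  refine (convex_pi fun _ _ => convex_Icc 0 1).inter fun x hx y hy a b ha hb _ i j hij => ?_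
  simpa using add_le_add (mul_le_mul_of_nonneg_left (hx hij) ha)
    (mul_le_mul_of_nonneg_left (hy hij) hb)

theorem sortedCube_inter_subset {σ τ : Equiv.Perm (Fin d)} (h : σ ≠ τ) :
    sortedCube σ ∩ sortedCube τ ⊆ {x | ¬Function.Injective x} := by
  rintro x ⟨⟨-, hσ⟩, -, hτ⟩ hx
  have hσ' := hσ.strictAnti_of_injective (hx.comp σ.injective)
  have hτ' := hτ.strictAnti_of_injective (hx.comp τ.injective)
  have hrange : range (x ∘ σ) = range (x ∘ τ) := by
    rw [range_comp, range_comp, σ.range_eq_univ, τ.range_eq_univ]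
  exact h <| Equiv.ext fun i => hx (congrFun ((hσ'.range_inj hτ').mp hrange) i)

theorem volume_sortedCube (σ : Equiv.Perm (Fin d)) :
    volume (sortedCube σ) = volume (sortedCube (1 : Equiv.Perm (Fin d))) := by
  have happ (x : Fin d → ℝ) : MeasurableEquiv.piCongrLeft (fun _ => ℝ) σ.symm x = x ∘ σ := by
    ext i
    simp [MeasurableEquiv.piCongrLeft, Equiv.piCongrLeft_apply_eq_cast]
  have hpre : MeasurableEquiv.piCongrLeft (fun _ => ℝ) σ.symm ⁻¹' sortedCube 1 = sortedCube σ := by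
    ext x
    simp only [sortedCube, mem_preimage, happ, mem_inter_iff, mem_pi, mem_univ, true_imp_iff,
      mem_ofPred_eq, Equiv.Perm.coe_one, Function.comp_id, Function.comp_apply]
    exact and_congr_left' (σ.forall_congr_right (q := fun i => x i ∈ Icc 0 1))
  rw [← hpre, (volume_measurePreserving_piCongrLeft _ _).measure_preimage
    (isClosed_sortedCube 1).measurableSet.nullMeasurableSet]

theorem volume_sortedCube_one_le :
    volume (sortedCube (1 : Equiv.Perm (Fin d))) ≤ (d.factorial : ℝ≥0∞)⁻¹ := by
  rw [ENNReal.le_inv_iff_mul_le, mul_comm]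
  calc d.factorial * volume (sortedCube 1) = volume (⋃ σ : Equiv.Perm (Fin d), sortedCube σ) := by
        rw [measure_iUnion₀
          (fun σ τ h => measure_mono_null (sortedCube_inter_subset h) volume_setOf_not_injective)
          fun σ => (isClosed_sortedCube σ).measurableSet.nullMeasurableSet, tsum_fintype]
        simp [volume_sortedCube, Fintype.card_perm]
    _ ≤ volume (univ.pi fun _ : Fin d => Icc (0 : ℝ) 1) :=
        measure_mono (iUnion_subset fun _ => inter_subset_left)
    _ = 1 := by rw [volume_pi_pi]; simp

end SortedCube

section Simplex

variable {d : ℕ}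

def cornerVertex : Fin (d + 1) → Fin d → ℝ :=
  Fin.cons 0 fun j => Pi.single j 1

theorem volume_convexHull_range_cornerVertex_le :
    volume (convexHull ℝ (range (cornerVertex (d := d)))) ≤ (d.factorial : ℝ≥0∞)⁻¹ := by
  set P : Matrix (Fin d) (Fin d) ℝ := of fun i j => if i ≤ j then 1 else 0
  have hdet : P.det = 1 := by
    rw [det_of_isUpperTriangular (M := P) fun i j hji => if_neg (not_le.mpr hji)]
    simp [P]
  have hvertex : range (toLin' P ∘ cornerVertex) ⊆ sortedCube 1 := by
    rintro _ ⟨k, rfl⟩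
    induction k using Fin.cases with
    | zero => exact ⟨fun i _ => by simp [cornerVertex], fun _ _ _ => by simp [cornerVertex]⟩
    | succ j =>
      simp only [Function.comp_apply, cornerVertex, Fin.cons_succ, toLin'_apply, mulVec_single_one]
      refine ⟨fun i _ => ?_, fun i i' hii' => ?_⟩
      · by_cases hij : i ≤ j <;> simp [P, hij]
      · by_cases hij : i ≤ j <;> by_cases hij' : i' ≤ j <;> simp [P, hij, hij']
        exact absurd (hii'.trans hij') hij
  calc volume (convexHull ℝ (range cornerVertex))
      = volume (toLin' P '' convexHull ℝ (range cornerVertex)) := by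
        rw [Measure.addHaar_image_linearMap, LinearMap.det_toLin', hdet]; simp
    _ = volume (convexHull ℝ (range (toLin' P ∘ cornerVertex))) := by
        rw [LinearMap.image_convexHull, range_comp]
    _ ≤ volume (sortedCube 1) := measure_mono (convexHull_min hvertex (convex_sortedCube 1))
    _ ≤ (d.factorial : ℝ≥0∞)⁻¹ := volume_sortedCube_one_le

def edgeMatrix {R : Type*} [Ring R] (v : Fin (d + 1) → Fin d → R) : Matrix (Fin d) (Fin d) R :=
  of fun k => v k.succ - v 0

def homogMatrix {R : Type*} [Ring R] (v : Fin (d + 1) → Fin d → R) :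
    Matrix (Fin (d + 1)) (Fin (d + 1)) R :=
  of fun k => Fin.cons 1 (v k)

theorem det_homogMatrix {R : Type*} [CommRing R] (v : Fin (d + 1) → Fin d → R) :
    (homogMatrix v).det = (edgeMatrix v).det := by
  -- `homogMatrix v` with row `0` subtracted from the other rows
  let B : Matrix (Fin (d + 1)) (Fin (d + 1)) R :=
    of (Fin.cons (Fin.cons 1 (v 0)) fun k => Fin.cons 0 (v k.succ - v 0))
  have hrow : (homogMatrix v).det = B.det :=
    det_eq_of_forall_row_eq_smul_add_const (Fin.cons 0 fun _ => 1) 0 rfl fun k j => by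
      induction k using Fin.cases <;> induction j using Fin.cases <;> simp [B, homogMatrix]
  rw [hrow, det_succ_column_zero, Fin.sum_univ_succ]
  simp [B, edgeMatrix]
  rfl

theorem volume_convexHull_range_eq_abs_det_mul (v : Fin (d + 1) → Fin d → ℝ) :
    volume (convexHull ℝ (range v)) =
      ENNReal.ofReal |(edgeMatrix v).det| *
        volume (convexHull ℝ (range (cornerVertex (d := d)))) := by
  set L := toLin' (edgeMatrix v)ᵀ
  have hv : range v = v 0 +ᵥ L '' range cornerVertex := by
    rw [← range_comp, ← image_vadd, ← range_comp]
    congr 1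
    funext k
    induction k using Fin.cases <;> simp [cornerVertex, L, edgeMatrix]
  rw [hv, convexHull_vadd, ← LinearMap.image_convexHull, measure_vadd,
    Measure.addHaar_image_linearMap, LinearMap.det_toLin', det_transpose]

end Simplex

theorem abs_det_le_factorial_mul {n R : Type*} [Fintype n] [DecidableEq n] [CommRing R]
    [LinearOrder R] [IsStrictOrderedRing R] (M : Matrix n n R) {K : R}
    (hK : ∀ σ : Equiv.Perm n, |∏ i, M (σ i) i| ≤ K) :
    |M.det| ≤ (Fintype.card n).factorial * K := by
  have hsign (σ : Equiv.Perm n) : |((Equiv.Perm.sign σ : ℤ) : R)| = 1 := by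
    rcases Int.units_eq_one_or (Equiv.Perm.sign σ) with h | h <;> simp [h]
  calc |M.det| = |∑ σ : Equiv.Perm n, (Equiv.Perm.sign σ : R) * ∏ i, M (σ i) i| := by
        rw [det_apply']
    _ ≤ ∑ σ : Equiv.Perm n, |(Equiv.Perm.sign σ : R) * ∏ i, M (σ i) i| :=
        Finset.abs_sum_le_sum_abs _ _
    _ ≤ ∑ _σ : Equiv.Perm n, K :=
        Finset.sum_le_sum fun σ _ => by rw [abs_mul, hsign, one_mul]; exact hK σ
    _ = (Fintype.card n).factorial * K := by simp [Fintype.card_perm]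

section Columns

variable {d m : ℕ} (A : Matrix (Fin d) (Fin m) ℝ)

theorem abs_det_homogMatrix_columns_le (hA : ∀ i j, 0 ≤ A i j) (c : Fin (d + 1) ↪ Fin m) :
    |(homogMatrix fun k i => A i (c k)).det| ≤
      (d + 1).factorial * ⨆ φ : Fin d ↪ Fin m, ∏ i, A i (φ i) := by
  refine (abs_det_le_factorial_mul _ fun σ => ?_).trans_eq (by rw [Fintype.card_fin])
  rw [Fin.prod_univ_succ]
  simp only [homogMatrix, of_apply, Fin.cons_zero, Fin.cons_succ, one_mul]
  rw [abs_of_nonneg (Finset.prod_nonneg fun i _ => hA _ _)]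
  exact le_ciSup (f := fun φ : Fin d ↪ Fin m => ∏ i, A i (φ i)) (finite_range _).bddAbove
    ((Fin.succEmb d).trans (σ.toEmbedding.trans c))

theorem volume_convexHull_columns_le (hA : ∀ i j, 0 ≤ A i j) (c : Fin (d + 1) ↪ Fin m) :
    volume (convexHull ℝ (range fun k i => A i (c k))) ≤
      ENNReal.ofReal ((d + 1) * ⨆ φ : Fin d ↪ Fin m, ∏ i, A i (φ i)) := by
  set M := ⨆ φ : Fin d ↪ Fin m, ∏ i, A i (φ i)
  have hM : 0 ≤ M := Real.iSup_nonneg fun φ => Finset.prod_nonneg fun i _ => hA _ _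
  rw [volume_convexHull_range_eq_abs_det_mul, ← det_homogMatrix]
  calc _ ≤ ENNReal.ofReal ((d + 1).factorial * M) * (d.factorial : ℝ≥0∞)⁻¹ :=
        mul_le_mul' (ENNReal.ofReal_le_ofReal (abs_det_homogMatrix_columns_le A hA c))
          volume_convexHull_range_cornerVertex_le
    _ = ENNReal.ofReal ((d + 1) * M) := by
        have hfact : ((d + 1).factorial : ℝ) * M = ((d + 1) * M) * (d.factorial : ℕ) := by
          push_cast [Nat.factorial_succ]; ring
        rw [hfact, ENNReal.ofReal_mul (by positivity), ENNReal.ofReal_natCast, mul_assoc,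
          ENNReal.mul_inv_cancel (by simp [Nat.factorial_ne_zero]) (ENNReal.natCast_ne_top _),
          mul_one]

end Columns

theorem convexHull_range_subset_biUnion_powersetCard {𝕜 E ι : Type*} [Field 𝕜] [LinearOrder 𝕜]
    [IsStrictOrderedRing 𝕜] [AddCommGroup E] [Module 𝕜 E] [FiniteDimensional 𝕜 E] [Fintype ι]
    (f : ι → E) (h : Module.finrank 𝕜 E + 1 ≤ Fintype.card ι) :
    convexHull 𝕜 (range f) ⊆
      ⋃ S ∈ Finset.powersetCard (Module.finrank 𝕜 E + 1) (Finset.univ : Finset ι),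
        convexHull 𝕜 (f '' ↑S) := by
  classical
  intro x hx
  rw [convexHull_eq_union] at hx
  simp only [mem_iUnion, exists_prop] at hx
  obtain ⟨t, hts, hindep, hxt⟩ := hx
  obtain ⟨u, -, hinj, rfl⟩ := Finset.exists_subset_injOn_image_eq_of_surjOn (f := f) univ t
    (by rwa [SurjOn, image_univ])
  have hu : u.card ≤ Module.finrank 𝕜 E + 1 := by
    rw [← Finset.card_image_of_injOn hinj]
    simpa using hindep.card_le_finrank_succ.trans
      (Nat.succ_le_succ (Submodule.finrank_le _))
  obtain ⟨S, huS, -, hS⟩ := Finset.exists_subsuperset_card_eq (Finset.subset_univ u) hu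
    (by rwa [Finset.card_univ])
  refine mem_biUnion (Finset.mem_powersetCard.mpr ⟨Finset.subset_univ S, hS⟩) ?_
  exact convexHull_mono (by simpa using image_mono (f := f) huS) hxt

theorem addHaar_convexHull_range_eq_zero {E ι : Type*} [NormedAddCommGroup E] [NormedSpace ℝ E]
    [MeasurableSpace E] [BorelSpace E] [FiniteDimensional ℝ E] [Fintype ι] (μ : Measure E)
    [μ.IsAddHaarMeasure] (f : ι → E) (h : Fintype.card ι ≤ Module.finrank ℝ E) :
    μ (convexHull ℝ (range f)) = 0 := by
  rcases isEmpty_or_nonempty ι with hι | hι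
  · simp [range_eq_empty]
  obtain ⟨n, hn⟩ := Nat.exists_eq_add_of_lt (Fintype.card_pos (α := ι))
  have hspan : affineSpan ℝ (range f) ≠ ⊤ := by
    intro htop
    have hrank := finrank_vectorSpan_range_le ℝ f (n := n) (by omega)
    rw [← direction_affineSpan, htop, AffineSubspace.direction_top, finrank_top] at hrank
    omega
  exact measure_mono_null (convexHull_subset_affineSpan _)
    (Measure.addHaar_affineSubspace μ _ hspan)

theorem volume_convexHull_le_dequantized_general (d m : ℕ)
    (A : Matrix (Fin d) (Fin m) ℝ) (hA : ∀ i j, 0 < A i j) :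
    MeasureTheory.volume (convexHull ℝ (Set.range fun j : Fin m => fun i => A i j)) ≤
      ENNReal.ofReal
        (((d : ℝ) + 1) * (Nat.choose m (d + 1) : ℝ) *
          ⨆ φ : Fin d ↪ Fin m, ∏ i, A i (φ i)) := by
  set f : Fin m → Fin d → ℝ := fun j i => A i j
  set M := ⨆ φ : Fin d ↪ Fin m, ∏ i, A i (φ i)
  rcases lt_or_ge m (d + 1) with hm | hm
  · have hnull := addHaar_convexHull_range_eq_zero volume f <| by
      rw [Fintype.card_fin, Module.finrank_fin_fun]; omega
    rw [hnull, Nat.choose_eq_zero_of_lt hm]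
    simp
  have hcover := convexHull_range_subset_biUnion_powersetCard (𝕜 := ℝ) f (by simpa using hm)
  rw [Module.finrank_fin_fun] at hcover
  calc volume (convexHull ℝ (range f))
      ≤ ∑ S ∈ Finset.powersetCard (d + 1) (Finset.univ : Finset (Fin m)),
          volume (convexHull ℝ (f '' S)) :=
        (measure_mono hcover).trans (measure_biUnion_finset_le _ _)
    _ ≤ ∑ S ∈ Finset.powersetCard (d + 1) Finset.univ, ENNReal.ofReal ((d + 1) * M) :=
        Finset.sum_le_sum fun S hS => by
          have hS := (Finset.mem_powersetCard.mp hS).2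
          rw [← S.range_orderEmbOfFin hS, ← range_comp]
          exact volume_convexHull_columns_le A (fun i j => (hA i j).le)
            (S.orderEmbOfFin hS).toEmbedding
    _ = ENNReal.ofReal ((d + 1) * m.choose (d + 1) * M) := by
        rw [Finset.sum_const, Finset.card_powersetCard, Finset.card_univ, Fintype.card_fin,
          nsmul_eq_mul, ← ENNReal.ofReal_natCast, ← ENNReal.ofReal_mul (by positivity)]
        ring_nf

/-- for a matrix `A ∈ ℝ^{d×m}` with strictly positive entries, the
Lebesgue volume of the convex hull of its columns is bounded by
`(d+1)·C(m,d+1)·max_φ ∏_i a_{i,φ(i)}`, the maximum being over injective maps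
`φ : [d] → [m]` (encoded as embeddings `Fin d ↪ Fin m`). -/
theorem volume_convexHull_le_dequantized (d m : ℕ) (hd : 1 ≤ d)
    (A : Matrix (Fin d) (Fin m) ℝ) (hA : ∀ i j, 0 < A i j) :
    MeasureTheory.volume (convexHull ℝ (Set.range fun j : Fin m => fun i => A i j)) ≤
      ENNReal.ofReal
        (((d : ℝ) + 1) * (Nat.choose m (d + 1) : ℝ) *
          ⨆ φ : Fin d ↪ Fin m, ∏ i, A i (φ i)) :=
  volume_convexHull_le_dequantized_general d m A hA
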